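/- (Generalized Jacobi identity, first form) Let L be a Lie algebra, let X_1,...,X_m ∈ L, let v be a word of length p ≥ 1 and w a word of length q ≥ 1 in {1,...,m}. Denote by X_u the left-nested bracket [X_{u_1},[X_{u_2},...,[X_{u_{k-1}},X_{u_k}]]...] for a word u, and by X_{[v]w} the bracket [X_v, X_w]. Then X_{[v]w} = Σ_{σ ∈ S_p} π_p(σ) X_{σ_1(v)⋯σ_p(v)w}, where σ(v) is the word v rearranged by σ and the right-hand side terms are left-nested brackets of the concatenated word σ(v)w. -/

import Mathlib

/-- The coefficient `π_ℓ` evaluated on the word `σ(1)σ(2)⋯σ(ℓ)` (letters `0,…,ℓ-1`),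
defined inductively: value `1` on a single letter; if the word starts with the
smallest letter `0`, recurse on the remaining (shifted) word; if it ends with `0`,
recurse with a sign change; otherwise the value is `0`. -/
def piW : List ℕ → ℤ
  | [] => 0
  | [_] => 1
  | a :: b :: l =>
    if a = 0 then piW ((b :: l).map (· - 1))
    else if (a :: b :: l).getLast? = some 0 then
      - piW ((a :: b :: l).dropLast.map (· - 1))
    else 0
termination_by w => w.length
decreasing_by all_goals (simp; try omega)

/-- `π_ℓ(σ)` for a permutation `σ` of `ℓ` letters. -/
def piPerm {ℓ : ℕ} (σ : Equiv.Perm (Fin ℓ)) : ℤ :=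
  piW ((List.finRange ℓ).map (fun j => (σ j : ℕ)))

/-- Left-nested Lie bracket of a list: `[x₁,[x₂,…,[x_{k-1},x_k]…]]`. -/
def nestedBracket {L : Type*} [LieRing L] : List L → L
  | [] => 0
  | [x] => x
  | x :: y :: l => ⁅x, nestedBracket (y :: l)⁆

/-! Write `x = X_{v_1}`, `N = X_{v_2⋯v_p}` and `Y = X_w`. The Jacobi identity gives
`[[x, N], Y] = [x, [N, Y]] - [N, [x, Y]]`, and expanding `[N, ·]` by induction on `p` turns the two
terms into the sums over the permutations placing the letter `v_1` first, with coefficient `π`,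
and last, with coefficient `-π`. These are exactly the permutations on which `π_p` can be nonzero,
and the recursion defining `π_p` assigns them these coefficients. -/

open Equiv Equiv.Perm

lemma nestedBracket_cons {L : Type*} [LieRing L] (x : L) {l : List L} (hl : l ≠ []) :
    nestedBracket (x :: l) = ⁅x, nestedBracket l⁆ := by
  cases l with
  | nil => exact absurd rfl hl
  | cons _ _ => rfl

lemma piW_zero_cons {l : List ℕ} (hl : l ≠ []) : piW (0 :: l) = piW (l.map (· - 1)) := by
  cases l with
  | nil => exact absurd rfl hl
  | cons _ _ => simp [piW]

lemma piW_cons_append_zero {a : ℕ} (ha : a ≠ 0) (l : List ℕ) :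
    piW (a :: l ++ [0]) = -piW ((a :: l).map (· - 1)) := by
  obtain ⟨b, l', hbl⟩ : ∃ b l', l ++ [0] = b :: l' := List.exists_cons_of_ne_nil (by simp)
  have hlast : (a :: b :: l').getLast? = some 0 := by
    rw [← hbl, ← List.cons_append, List.getLast?_concat]
  rw [List.cons_append, hbl, piW, if_neg ha, if_pos hlast, ← hbl, ← List.cons_append,
    List.dropLast_concat]

lemma piW_eq_zero {a b : ℕ} {l : List ℕ} (ha : a ≠ 0)
    (hl : (a :: b :: l).getLast? ≠ some 0) : piW (a :: b :: l) = 0 := by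
  rw [piW, if_neg ha, if_neg hl]

section Words

/- `decomposeFin.symm (0, σ)` fixes `0` and acts as `σ` on the other letters; composing with
`finRotate` moves the letter `0` to the last position. -/

variable {α : Type*} {n : ℕ}

lemma ofFn_comp_decomposeFin_symm_zero (f : Fin (n + 1) → α) (σ : Perm (Fin n)) :
    List.ofFn (f ∘ decomposeFin.symm (0, σ)) = f 0 :: List.ofFn (f ∘ Fin.succ ∘ σ) := by
  rw [List.ofFn_succ]
  simp only [Function.comp_apply, decomposeFin_symm_apply_zero, decomposeFin_symm_apply_succ,
    swap_self, refl_apply]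
  rfl

lemma ofFn_comp_decomposeFin_symm_zero_mul_finRotate (f : Fin (n + 1) → α) (σ : Perm (Fin n)) :
    List.ofFn (f ∘ ⇑(decomposeFin.symm (0, σ) * finRotate (n + 1))) =
      List.ofFn (f ∘ Fin.succ ∘ σ) ++ [f 0] := by
  rw [List.ofFn_succ', List.concat_eq_append]
  simp only [coe_mul, Function.comp_apply, finRotate_apply, Fin.coeSucc_eq_succ, Fin.last_add_one,
    decomposeFin_symm_apply_zero, decomposeFin_symm_apply_succ, swap_self, refl_apply]
  rfl

end Words

section Sums

variable {M : Type*} [AddCommMonoid M]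

lemma sum_ite_apply_zero_eq_sum {n : ℕ} (g : Perm (Fin (n + 1)) → M) :
    ∑ τ : Perm (Fin (n + 1)), (if τ 0 = 0 then g τ else 0) =
      ∑ σ : Perm (Fin n), g (decomposeFin.symm (0, σ)) := by
  rw [← decomposeFin.symm.sum_comp, Fintype.sum_prod_type]
  simp [decomposeFin_symm_apply_zero]

lemma sum_perm_eq_of_apply_zero_ne {n : ℕ} (g : Perm (Fin (n + 2)) → M)
    (hg : ∀ τ, τ 0 ≠ 0 → τ (Fin.last _) ≠ 0 → g τ = 0) :
    ∑ τ, g τ = ∑ σ, g (decomposeFin.symm (0, σ)) +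
      ∑ σ, g (decomposeFin.symm (0, σ) * finRotate (n + 2)) := by
  have hsplit : ∀ τ : Perm (Fin (n + 2)),
      g τ = (if τ 0 = 0 then g τ else 0) + (if τ (Fin.last _) = 0 then g τ else 0) := by
    intro τ
    by_cases h0 : τ 0 = 0
    · have hl : τ (Fin.last _) ≠ 0 := fun hl =>
        Fin.last_pos.ne' (τ.injective (hl.trans h0.symm))
      simp [h0, hl]
    · by_cases hl : τ (Fin.last _) = 0 <;> simp [h0, hl, hg]
  have hlast : ∑ τ : Perm (Fin (n + 2)), (if τ (Fin.last _) = 0 then g τ else 0) =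
      ∑ τ : Perm (Fin (n + 2)), (if τ 0 = 0 then g (τ * finRotate _) else 0) := by
    refine (Fintype.sum_equiv (Equiv.mulRight (finRotate _)) _ _ fun τ => ?_).symm
    simp
  rw [Fintype.sum_congr _ _ hsplit, Finset.sum_add_distrib, hlast, sum_ite_apply_zero_eq_sum,
    sum_ite_apply_zero_eq_sum]

end Sums

lemma piPerm_eq_piW_ofFn {n : ℕ} (σ : Perm (Fin n)) :
    piPerm σ = piW (List.ofFn (Fin.val ∘ σ)) := by
  rw [piPerm, List.ofFn_eq_map]
  rfl

lemma piPerm_decomposeFin_symm_zero {n : ℕ} (σ : Perm (Fin (n + 1))) :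
    piPerm (decomposeFin.symm (0, σ)) = piPerm σ := by
  rw [piPerm_eq_piW_ofFn, ofFn_comp_decomposeFin_symm_zero, Fin.val_zero,
    piW_zero_cons (by simp), List.map_ofFn, piPerm_eq_piW_ofFn]
  rfl

lemma piPerm_decomposeFin_symm_zero_mul_finRotate {n : ℕ} (σ : Perm (Fin (n + 1))) :
    piPerm (decomposeFin.symm (0, σ) * finRotate (n + 2)) = -piPerm σ := by
  rw [piPerm_eq_piW_ofFn, ofFn_comp_decomposeFin_symm_zero_mul_finRotate, Fin.val_zero,
    List.ofFn_succ, piW_cons_append_zero (by simp), ← List.ofFn_succ, List.map_ofFn,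
    piPerm_eq_piW_ofFn]
  rfl

lemma piPerm_eq_zero {n : ℕ} {τ : Perm (Fin (n + 2))} (h0 : τ 0 ≠ 0)
    (hl : τ (Fin.last _) ≠ 0) : piPerm τ = 0 := by
  have hlast : (List.ofFn (Fin.val ∘ τ)).getLast? = some (τ (Fin.last _) : ℕ) := by
    rw [List.getLast?_eq_some_getLast (by simp), List.getLast_ofFn]
    rfl
  rw [piPerm_eq_piW_ofFn]
  rw [List.ofFn_succ, List.ofFn_succ] at hlast ⊢
  apply piW_eq_zero
  · simpa [Fin.val_eq_zero_iff] using h0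
  · rw [hlast]
    simpa [Fin.val_eq_zero_iff] using hl

theorem lie_nestedBracket_ofFn_eq_sum {L : Type*} [LieRing L] {n : ℕ} (f : Fin (n + 1) → L)
    {ys : List L} (hys : ys ≠ []) :
    ⁅nestedBracket (List.ofFn f), nestedBracket ys⁆ =
      ∑ σ : Perm (Fin (n + 1)), piPerm σ • nestedBracket (List.ofFn (f ∘ σ) ++ ys) := by
  induction n generalizing ys with
  | zero =>
    have : Subsingleton (Fin (0 + 1)) := Fin.subsingleton_one
    rw [Fintype.sum_unique]
    simp [piPerm, piW, nestedBracket, nestedBracket_cons _ hys]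
  | succ n ih =>
    rw [List.ofFn_succ, nestedBracket_cons _ (by simp), lie_lie, ih _ hys,
      ← nestedBracket_cons (f 0) hys, ih _ (List.cons_ne_nil _ _), lie_sum,
      sum_perm_eq_of_apply_zero_ne _ fun τ h0 hl => by rw [piPerm_eq_zero h0 hl, zero_smul],
      sub_eq_add_neg, ← Finset.sum_neg_distrib]
    congr 1 <;> refine Finset.sum_congr rfl fun σ _ => ?_
    · rw [lie_zsmul, piPerm_decomposeFin_symm_zero, ofFn_comp_decomposeFin_symm_zero,
        List.cons_append, nestedBracket_cons _ (by simp)]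
      rfl
    · rw [piPerm_decomposeFin_symm_zero_mul_finRotate,
        ofFn_comp_decomposeFin_symm_zero_mul_finRotate, neg_smul, List.append_assoc,
        List.singleton_append]
      rfl

theorem generalized_jacobi_first_general {L : Type*} [LieRing L]
    {m p q : ℕ} (hp : 1 ≤ p) (hq : 1 ≤ q)
    (X : Fin m → L) (v : Fin p → Fin m) (w : Fin q → Fin m) :
    ⁅nestedBracket ((List.finRange p).map fun j => X (v j)),
      nestedBracket ((List.finRange q).map fun j => X (w j))⁆ =
      ∑ σ : Equiv.Perm (Fin p),
        piPerm σ • nestedBracket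
          (((List.finRange p).map fun j => X (v (σ j))) ++
            (List.finRange q).map fun j => X (w j)) := by
  obtain ⟨n, rfl⟩ : ∃ n, p = n + 1 := ⟨p - 1, by omega⟩
  simp only [← List.ofFn_eq_map]
  exact lie_nestedBracket_ofFn_eq_sum _ (by simp; omega)

/-- generalized Jacobi identity, first form:
`X_{[v]w} = Σ_{σ ∈ S_p} π_p(σ) X_{σ(v)w}`. -/
theorem generalized_jacobi_first {L : Type*} [LieRing L] [LieAlgebra ℝ L]
    {m p q : ℕ} (hp : 1 ≤ p) (hq : 1 ≤ q)
    (X : Fin m → L) (v : Fin p → Fin m) (w : Fin q → Fin m) :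
    ⁅nestedBracket ((List.finRange p).map fun j => X (v j)),
      nestedBracket ((List.finRange q).map fun j => X (w j))⁆ =
      ∑ σ : Equiv.Perm (Fin p),
        piPerm σ • nestedBracket
          (((List.finRange p).map fun j => X (v (σ j))) ++
            (List.finRange q).map fun j => X (w j)) :=
  generalized_jacobi_first_general hp hq X v w
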